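/- arXiv:2509.18837 — 2 statements merged into one kernel-verified Lean document; each statement's English description precedes it below -/
import Mathlib

section
/- For H in (0,1), the integral of (1 - cos x) * x^(-2H-1) over (0, ∞) equals π / (2 Γ(2H+1) sin(πH)). -/
open Real MeasureTheory Set Filter Topology

lemma laplace_one_sub_cos {t : ℝ} (ht : 0 < t) :
    ∫ x in Ioi (0:ℝ), (1 - Real.cos x) * Real.exp (-(t * x)) = 1 / (t * (1 + t ^ 2)) := by
  have h1t : (0:ℝ) < 1 + t ^ 2 := by positivity
  set F : ℝ → ℝ := fun x => -Real.exp (-(t * x)) / t +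
      Real.exp (-(t * x)) * (t * Real.cos x - Real.sin x) / (1 + t ^ 2) with hF
  have hderiv : ∀ x ∈ Ioi (0:ℝ), HasDerivAt F ((1 - Real.cos x) * Real.exp (-(t * x))) x := by
    intro x _
    have he : HasDerivAt (fun x => Real.exp (-(t * x))) (-t * Real.exp (-(t * x))) x := by
      have : HasDerivAt (fun x : ℝ => -(t * x)) (-t) x := by
        simpa using ((hasDerivAt_id x).const_mul t).fun_neg
      simpa [mul_comm] using this.exp
    have hc : HasDerivAt (fun x => t * Real.cos x - Real.sin x)
        (t * (-Real.sin x) - Real.cos x) x :=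
      ((Real.hasDerivAt_cos x).const_mul t).sub (Real.hasDerivAt_sin x)
    have h2 : HasDerivAt (fun x => Real.exp (-(t * x)) * (t * Real.cos x - Real.sin x))
        (-t * Real.exp (-(t * x)) * (t * Real.cos x - Real.sin x) +
          Real.exp (-(t * x)) * (t * (-Real.sin x) - Real.cos x)) x := he.mul hc
    have h3 := ((he.div_const t).fun_neg).fun_add (h2.div_const (1 + t ^ 2))
    have hfun : F = fun x => -(Real.exp (-(t * x)) / t) +
        Real.exp (-(t * x)) * (t * Real.cos x - Real.sin x) / (1 + t ^ 2) := by
      funext y; rw [hF]; ring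
    rw [hfun]
    refine h3.congr_deriv ?_
    field_simp
    ring
  have hint : IntegrableOn (fun x => (1 - Real.cos x) * Real.exp (-(t * x))) (Ioi 0) := by
    have hexp : IntegrableOn (fun x => 2 * Real.exp (-t * x)) (Ioi (0:ℝ)) :=
      (exp_neg_integrableOn_Ioi 0 ht).const_mul 2
    refine hexp.mono' ?_ ?_
    · exact (((continuous_const.sub Real.continuous_cos).mul
        ((Real.continuous_exp.comp (continuous_const.mul continuous_id).neg))).aestronglyMeasurable)
    · filter_upwards with x
      have h1 : |1 - Real.cos x| ≤ 2 := by
        rw [abs_le]; constructor <;> nlinarith [Real.neg_one_le_cos x, Real.cos_le_one x]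
      have h2 : |(1 - Real.cos x) * Real.exp (-(t * x))| ≤ 2 * Real.exp (-(t * x)) := by
        rw [abs_mul, abs_of_nonneg (Real.exp_pos _).le]
        exact mul_le_mul_of_nonneg_right h1 (Real.exp_pos _).le
      calc ‖(1 - Real.cos x) * Real.exp (-(t * x))‖ ≤ 2 * Real.exp (-(t * x)) := h2
        _ = 2 * Real.exp (-t * x) := by ring_nf
  have hexp0 : Tendsto (fun x => Real.exp (-(t * x))) atTop (𝓝 0) := by
    have h1 : Tendsto (fun x : ℝ => t * x) atTop atTop := tendsto_id.const_mul_atTop ht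
    exact Real.tendsto_exp_neg_atTop_nhds_zero.comp h1
  have htend : Tendsto F atTop (𝓝 0) := by
    apply squeeze_zero_norm (a := fun x => (1 / t + (t + 1) / (1 + t ^ 2)) * Real.exp (-(t * x)))
    · intro x
      have hts : |t * Real.cos x - Real.sin x| ≤ t + 1 := by
        calc |t * Real.cos x - Real.sin x| ≤ |t * Real.cos x| + |Real.sin x| := abs_sub _ _
          _ ≤ t * 1 + 1 := by
              rw [abs_mul, abs_of_pos ht]
              exact add_le_add (mul_le_mul_of_nonneg_left (Real.abs_cos_le_one x) ht.le)
                (Real.abs_sin_le_one x)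
          _ = t + 1 := by ring
      have e0 := (Real.exp_pos (-(t * x))).le
      calc ‖F x‖ ≤ |(-Real.exp (-(t * x)) / t)| +
            |Real.exp (-(t * x)) * (t * Real.cos x - Real.sin x) / (1 + t ^ 2)| := abs_add_le _ _
        _ ≤ Real.exp (-(t * x)) / t + Real.exp (-(t * x)) * (t + 1) / (1 + t ^ 2) := by
            gcongr
            · rw [abs_div, abs_neg, abs_of_nonneg e0, abs_of_pos ht]
            · rw [abs_div, abs_of_pos h1t, abs_mul, abs_of_nonneg e0]
              gcongr
        _ = (1 / t + (t + 1) / (1 + t ^ 2)) * Real.exp (-(t * x)) := by ring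
    · simpa using hexp0.const_mul (1 / t + (t + 1) / (1 + t ^ 2))
  have key := integral_Ioi_of_hasDerivAt_of_tendsto (f := F)
    (f' := fun x => (1 - Real.cos x) * Real.exp (-(t * x)))
    (Continuous.continuousWithinAt (by fun_prop)) hderiv hint htend
  rw [key]
  simp only [hF, mul_zero, neg_zero, Real.exp_zero, Real.cos_zero, Real.sin_zero]
  field_simp
  ring

lemma int_rpow_div_one_add_sq (H : ℝ) (hH0 : 0 < H) (hH1 : H < 1) :
    ∫ t in Ioi (0:ℝ), t ^ (2*H - 1) / (1 + t ^ 2) = π / (2 * Real.sin (π * H)) := by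
  have hq : (-1:ℝ) < 2*H - 1 := by linarith
  set g : ℝ → ℝ → ℝ := fun u t => t ^ (2*H - 1) * Real.exp (-((1 + t ^ 2) * u)) with hg
  have hsplit : ∀ u t : ℝ, g u t = t ^ (2*H - 1) * Real.exp (-u * t ^ 2) * Real.exp (-u) := by
    intro u t
    show t ^ (2*H - 1) * Real.exp (-((1 + t ^ 2) * u)) = _
    rw [show -((1 + t ^ 2) * u) = -u * t ^ 2 + -u from by ring, Real.exp_add, mul_assoc]
  -- inner t-integral for u > 0
  have hinner_t : ∀ u : ℝ, 0 < u →
      ∫ t in Ioi (0:ℝ), g u t = Real.exp (-u) * (u ^ (-H) * ((1/2) * Real.Gamma H)) := by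
    intro u hu
    calc ∫ t in Ioi (0:ℝ), g u t
        = ∫ t in Ioi (0:ℝ), (t ^ (2*H - 1) * Real.exp (-u * t ^ (2:ℝ))) * Real.exp (-u) := by
          refine integral_congr_ae (Eventually.of_forall fun t => ?_)
          simp only [Real.rpow_two]
          rw [hsplit]
      _ = (∫ t in Ioi (0:ℝ), t ^ (2*H - 1) * Real.exp (-u * t ^ (2:ℝ))) * Real.exp (-u) :=
          integral_mul_const _ _
      _ = u ^ (-(2*H - 1 + 1)/2) * (1/2) * Real.Gamma ((2*H - 1 + 1)/2) * Real.exp (-u) := by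
          rw [integral_rpow_mul_exp_neg_mul_rpow two_pos hq hu]
      _ = Real.exp (-u) * (u ^ (-H) * ((1/2) * Real.Gamma H)) := by
          rw [show (2*H - 1 + 1)/2 = H by ring, show -(2*H - 1 + 1)/2 = -H by ring]; ring
  -- inner u-integral for any t
  have hinner_u : ∀ t : ℝ, ∫ u in Ioi (0:ℝ), g u t = t ^ (2*H - 1) / (1 + t ^ 2) := by
    intro t
    have h1t : (0:ℝ) < 1 + t ^ 2 := by positivity
    have hval := Real.integral_rpow_mul_exp_neg_mul_Ioi (one_pos) h1t
    simp only [sub_self, Real.rpow_zero, one_mul, Real.rpow_one, Real.Gamma_one, mul_one] at hval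
    calc ∫ u in Ioi (0:ℝ), g u t
        = t ^ (2*H - 1) * ∫ u in Ioi (0:ℝ), Real.exp (-((1 + t ^ 2) * u)) := by
          rw [hg]; exact integral_const_mul _ _
      _ = t ^ (2*H - 1) * (1 / (1 + t ^ 2)) := by rw [hval]
      _ = t ^ (2*H - 1) / (1 + t ^ 2) := by rw [mul_one_div]
  -- integrability on the product
  set μ : Measure ℝ := volume.restrict (Ioi 0) with hμ
  have hmeas : AEStronglyMeasurable (Function.uncurry g) (μ.prod μ) := by
    apply Measurable.aestronglyMeasurable
    exact (measurable_snd.pow measurable_const).mul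
      (((measurable_const.add (measurable_snd.pow measurable_const)).mul measurable_fst).neg.exp)
  have hnorm : ∀ u : ℝ, 0 < u → ∫ t, ‖g u t‖ ∂μ = ∫ t, g u t ∂μ := by
    intro u hu
    refine integral_congr_ae ?_
    filter_upwards [self_mem_ae_restrict measurableSet_Ioi] with t ht
    exact Real.norm_of_nonneg (mul_nonneg (Real.rpow_nonneg (le_of_lt ht) _) (Real.exp_pos _).le)
  have hGamInt : IntegrableOn (fun u => Real.exp (-u) * (u ^ (-H) * ((1/2) * Real.Gamma H)))
      (Ioi (0:ℝ)) := by
    have h1 : IntegrableOn (fun u => Real.exp (-u) * u ^ ((1-H) - 1)) (Ioi (0:ℝ)) :=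
      Real.GammaIntegral_convergent (by linarith)
    have h2 := h1.mul_const ((1/2) * Real.Gamma H)
    exact h2.congr (Eventually.of_forall fun u => by rw [show (1:ℝ)-H-1 = -H by ring]; ring)
  have hInt : Integrable (Function.uncurry g) (μ.prod μ) := by
    rw [integrable_prod_iff hmeas]
    constructor
    · filter_upwards [self_mem_ae_restrict measurableSet_Ioi] with u hu
      have base : IntegrableOn (fun t => t ^ (2*H - 1) * Real.exp (-u * t ^ 2)) (Ioi 0) :=
        integrableOn_rpow_mul_exp_neg_mul_sq hu hq
      exact (base.mul_const (Real.exp (-u))).congr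
        (Eventually.of_forall fun t => (hsplit u t).symm)
    · apply hGamInt.congr
      filter_upwards [self_mem_ae_restrict measurableSet_Ioi] with u hu
      rw [← hinner_t u hu, ← hnorm u hu]
      rfl
  have hswap := integral_integral_swap hInt
  have hLHS : ∫ u, ∫ t, g u t ∂μ ∂μ = Real.Gamma (1-H) * ((1/2) * Real.Gamma H) := by
    have e1 : ∫ u, ∫ t, g u t ∂μ ∂μ
        = ∫ u in Ioi (0:ℝ), Real.exp (-u) * (u ^ (-H) * ((1/2) * Real.Gamma H)) := by
      refine integral_congr_ae ?_
      filter_upwards [self_mem_ae_restrict measurableSet_Ioi] with u hu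
      exact hinner_t u hu
    have e2 : ∫ u in Ioi (0:ℝ), Real.exp (-u) * (u ^ (-H) * ((1/2) * Real.Gamma H))
        = (∫ u in Ioi (0:ℝ), Real.exp (-u) * u ^ ((1-H) - 1)) * ((1/2) * Real.Gamma H) := by
      rw [← integral_mul_const]
      refine integral_congr_ae (Eventually.of_forall fun u => ?_)
      rw [show (1:ℝ)-H-1 = -H by ring]; ring
    rw [e1, e2, ← Real.Gamma_eq_integral (by linarith : (0:ℝ) < 1 - H)]
  have hRHS : ∫ t, ∫ u, g u t ∂μ ∂μ = ∫ t in Ioi (0:ℝ), t ^ (2*H - 1) / (1 + t ^ 2) := by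
    refine integral_congr_ae (Eventually.of_forall fun t => ?_)
    exact hinner_u t
  have hmain : ∫ t in Ioi (0:ℝ), t ^ (2*H - 1) / (1 + t ^ 2)
      = Real.Gamma (1-H) * ((1/2) * Real.Gamma H) := by
    rw [← hRHS, ← hswap, hLHS]
  rw [hmain]
  have hrefl := Real.Gamma_mul_Gamma_one_sub H
  have : Real.Gamma (1-H) * ((1/2) * Real.Gamma H) = (Real.Gamma H * Real.Gamma (1-H)) / 2 := by
    ring
  rw [this, hrefl]
  ring

lemma I3_integrable (H : ℝ) (hH0 : 0 < H) (hH1 : H < 1) :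
    IntegrableOn (fun t : ℝ => t ^ (2*H - 1) / (1 + t ^ 2)) (Ioi 0) := by
  have hmeas : ∀ s : Set ℝ, AEStronglyMeasurable (fun t : ℝ => t ^ (2*H - 1) / (1 + t ^ 2))
      (volume.restrict s) := fun s => (((measurable_id.pow measurable_const).div
      (measurable_const.add (measurable_id.pow measurable_const)))).aestronglyMeasurable
  have h1 : IntegrableOn (fun t : ℝ => t ^ (2*H - 1) / (1 + t ^ 2)) (Ioc 0 1) := by
    have hbase : IntegrableOn (fun t : ℝ => t ^ (2*H - 1)) (Ioc (0:ℝ) 1) := by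
      have := intervalIntegral.intervalIntegrable_rpow' (r := 2*H - 1) (a := 0) (b := 1) (by linarith)
      rwa [intervalIntegrable_iff_integrableOn_Ioc_of_le zero_le_one] at this
    refine hbase.mono' (hmeas _) ?_
    filter_upwards [self_mem_ae_restrict measurableSet_Ioc] with t ht
    have h0 : (0:ℝ) ≤ t ^ (2*H - 1) := Real.rpow_nonneg ht.1.le _
    rw [Real.norm_of_nonneg (div_nonneg h0 (by positivity))]
    calc t ^ (2*H - 1) / (1 + t ^ 2) ≤ t ^ (2*H - 1) / 1 := by
          apply div_le_div_of_nonneg_left h0 one_pos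
          nlinarith
      _ = t ^ (2*H - 1) := div_one _
  have h2 : IntegrableOn (fun t : ℝ => t ^ (2*H - 1) / (1 + t ^ 2)) (Ioi 1) := by
    have hbase : IntegrableOn (fun t : ℝ => t ^ (2*H - 3)) (Ioi (1:ℝ)) :=
      integrableOn_Ioi_rpow_of_lt (by linarith) one_pos
    refine hbase.mono' (hmeas _) ?_
    filter_upwards [self_mem_ae_restrict measurableSet_Ioi] with t ht
    have ht0 : (0:ℝ) < t := lt_trans one_pos ht
    have h0 : (0:ℝ) ≤ t ^ (2*H - 1) := Real.rpow_nonneg ht0.le _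
    rw [Real.norm_of_nonneg (div_nonneg h0 (by positivity))]
    calc t ^ (2*H - 1) / (1 + t ^ 2) ≤ t ^ (2*H - 1) / t ^ (2:ℝ) := by
          apply div_le_div_of_nonneg_left h0 (by positivity)
          rw [Real.rpow_two]; nlinarith
      _ = t ^ (2*H - 1 - 2) := (Real.rpow_sub ht0 _ _).symm
      _ = t ^ (2*H - 3) := by ring_nf
  have := h1.union h2
  rwa [Ioc_union_Ioi_eq_Ioi zero_le_one] at this

theorem cosine_integral (H : ℝ) (hH0 : 0 < H) (hH1 : H < 1) :
    ∫ x in Ioi (0:ℝ), (1 - Real.cos x) * x ^ (-2*H - 1) =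
      π / (2 * Real.Gamma (2*H + 1) * Real.sin (π * H)) := by
  have hG : (0:ℝ) < Real.Gamma (2*H + 1) := Real.Gamma_pos_of_pos (by linarith)
  set f : ℝ → ℝ → ℝ := fun t x => (1 - Real.cos x) * (t ^ (2*H) * Real.exp (-(t*x))) with hf
  set μ : Measure ℝ := volume.restrict (Ioi 0) with hμ
  -- inner integral over t for fixed x > 0
  have hinner_t : ∀ x : ℝ, 0 < x →
      ∫ t, f t x ∂μ = (1 - Real.cos x) * (x ^ (-2*H - 1) * Real.Gamma (2*H + 1)) := by
    intro x hx
    have hval := Real.integral_rpow_mul_exp_neg_mul_Ioi (by linarith : (0:ℝ) < 2*H + 1) hx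
    have hgam : ∫ t in Ioi (0:ℝ), t ^ (2*H) * Real.exp (-(t*x))
        = x ^ (-2*H - 1) * Real.Gamma (2*H + 1) := by
      rw [show ∫ t in Ioi (0:ℝ), t ^ (2*H) * Real.exp (-(t*x))
          = ∫ t in Ioi (0:ℝ), t ^ (2*H + 1 - 1) * Real.exp (-(x*t)) from by
        refine integral_congr_ae (Eventually.of_forall fun t => ?_)
        simp only [show 2*H + 1 - 1 = 2*H from by ring, mul_comm x t], hval]
      rw [one_div, ← Real.rpow_neg_one x, ← Real.rpow_mul hx.le,
        show (-1) * (2*H + 1) = -2*H - 1 by ring]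
    calc ∫ t, f t x ∂μ = (1 - Real.cos x) * ∫ t in Ioi (0:ℝ), t ^ (2*H) * Real.exp (-(t*x)) := by
          rw [hf, hμ]; exact integral_const_mul _ _
      _ = (1 - Real.cos x) * (x ^ (-2*H - 1) * Real.Gamma (2*H + 1)) := by rw [hgam]
  -- inner integral over x for fixed t > 0
  have hinner_x : ∀ t : ℝ, 0 < t →
      ∫ x, f t x ∂μ = t ^ (2*H - 1) / (1 + t ^ 2) := by
    intro t ht
    calc ∫ x, f t x ∂μ = t ^ (2*H) * ∫ x in Ioi (0:ℝ), (1 - Real.cos x) * Real.exp (-(t*x)) := by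
          rw [← integral_const_mul]
          refine integral_congr_ae (Eventually.of_forall fun x => ?_)
          rw [hf]; ring
      _ = t ^ (2*H) * (1 / (t * (1 + t ^ 2))) := by rw [laplace_one_sub_cos ht]
      _ = (t ^ (2*H) / t ^ (1:ℝ)) * (1 / (1 + t ^ 2)) := by
          rw [Real.rpow_one]; field_simp
      _ = t ^ (2*H - 1) / (1 + t ^ 2) := by
          rw [← Real.rpow_sub ht, mul_one_div]
  -- measurability on product
  have hmeas : AEStronglyMeasurable (Function.uncurry f) (μ.prod μ) := by
    apply Measurable.aestronglyMeasurable
    exact ((measurable_const.sub (Real.measurable_cos.comp measurable_snd))).mul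
      ((measurable_fst.pow measurable_const).mul
        ((measurable_fst.mul measurable_snd).neg.exp))
  have hnonneg : ∀ t : ℝ, 0 < t → ∀ x : ℝ, 0 ≤ f t x := by
    intro t ht x
    apply mul_nonneg (by nlinarith [Real.cos_le_one x])
    exact mul_nonneg (Real.rpow_nonneg ht.le _) (Real.exp_pos _).le
  -- integrability on the product
  have hInt : Integrable (Function.uncurry f) (μ.prod μ) := by
    rw [integrable_prod_iff hmeas]
    constructor
    · filter_upwards [self_mem_ae_restrict measurableSet_Ioi] with t ht
      simp only [Function.uncurry_apply_pair]
      have hbase : IntegrableOn (fun x => (2 * t ^ (2*H)) * Real.exp (-t * x)) (Ioi (0:ℝ)) :=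
        (exp_neg_integrableOn_Ioi 0 ht).const_mul _
      refine hbase.mono' ?_ ?_
      · apply Measurable.aestronglyMeasurable
        simp only [hf]
        exact ((measurable_const.sub Real.measurable_cos)).mul
          (measurable_const.mul (measurable_id.const_mul t).neg.exp)
      · filter_upwards with x
        rw [Real.norm_of_nonneg (hnonneg t ht x)]
        simp only [hf]
        have h1 : (1 - Real.cos x) ≤ 2 := by nlinarith [Real.neg_one_le_cos x]
        have h2 : (0:ℝ) ≤ t ^ (2*H) * Real.exp (-(t*x)) :=
          mul_nonneg (Real.rpow_nonneg ht.le _) (Real.exp_pos _).le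
        calc (1 - Real.cos x) * (t ^ (2*H) * Real.exp (-(t*x)))
            ≤ 2 * (t ^ (2*H) * Real.exp (-(t*x))) := by nlinarith
          _ = (2 * t ^ (2*H)) * Real.exp (-t * x) := by rw [neg_mul]; ring
    · apply (I3_integrable H hH0 hH1).congr
      filter_upwards [self_mem_ae_restrict measurableSet_Ioi] with t ht
      rw [← hinner_x t ht]
      refine integral_congr_ae (Eventually.of_forall fun x => ?_)
      simp only [Function.uncurry_apply_pair]
      exact (Real.norm_of_nonneg (hnonneg t ht x)).symm
  have hswap := integral_integral_swap hInt
  -- main computation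
  calc ∫ x in Ioi (0:ℝ), (1 - Real.cos x) * x ^ (-2*H - 1)
      = ∫ x, (∫ t, f t x ∂μ) / Real.Gamma (2*H + 1) ∂μ := by
        refine integral_congr_ae ?_
        filter_upwards [self_mem_ae_restrict measurableSet_Ioi] with x hx
        rw [hinner_t x hx]
        field_simp
    _ = (∫ x, ∫ t, f t x ∂μ ∂μ) / Real.Gamma (2*H + 1) := integral_div _ _
    _ = (∫ t, ∫ x, f t x ∂μ ∂μ) / Real.Gamma (2*H + 1) := by rw [← hswap]
    _ = (∫ t in Ioi (0:ℝ), t ^ (2*H - 1) / (1 + t ^ 2)) / Real.Gamma (2*H + 1) := by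
        congr 1
        refine integral_congr_ae ?_
        filter_upwards [self_mem_ae_restrict measurableSet_Ioi] with t ht
        exact hinner_x t ht
    _ = (π / (2 * Real.sin (π * H))) / Real.Gamma (2*H + 1) := by
        rw [int_rpow_div_one_add_sq H hH0 hH1]
    _ = π / (2 * Real.Gamma (2*H + 1) * Real.sin (π * H)) := by
        rw [div_div]; ring_nf
end

section
/- For β in (0,1), the improper integral of x^(β-1) cos x over (0, ∞) equals Γ(β) cos(πβ/2). -/
open Real MeasureTheory Set Filter

lemma aux_ftc (t T : ℝ) :
    ∫ x in (0:ℝ)..T, Real.exp (-(t*x)) * Real.cos x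
      = (t + Real.exp (-(t*T)) * (Real.sin T - t * Real.cos T)) / (1 + t^2) := by
  have h2 : (0:ℝ) < 1 + t^2 := by positivity
  have key : ∀ x : ℝ, HasDerivAt
      (fun x => (Real.exp (-(t*x)) * (Real.sin x - t * Real.cos x)) / (1 + t^2))
      (Real.exp (-(t*x)) * Real.cos x) x := by
    intro x
    have he : HasDerivAt (fun x : ℝ => Real.exp (-(t*x))) (Real.exp (-(t*x)) * (-t)) x := by
      have h0 : HasDerivAt (fun x : ℝ => -(t*x)) (-t) x := by
        simpa [neg_mul] using ((hasDerivAt_id x).const_mul (-t))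
      exact h0.exp
    have hs : HasDerivAt (fun x => Real.sin x - t * Real.cos x)
        (Real.cos x + t * Real.sin x) x := by
      exact ((Real.hasDerivAt_sin x).sub ((Real.hasDerivAt_cos x).const_mul t)).congr_deriv (by ring)
    have := (he.mul hs).div_const (1 + t^2)
    refine this.congr_deriv ?_
    rw [div_eq_iff h2.ne']
    ring
  rw [intervalIntegral.integral_eq_sub_of_hasDerivAt (fun x _ => key x)
    (by apply Continuous.intervalIntegrable; continuity)]
  simp only [mul_zero, neg_zero, Real.exp_zero, Real.sin_zero, Real.cos_zero, one_mul]
  field_simp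
  ring

lemma aux_rep {β : ℝ} (hβ1 : β < 1) {x : ℝ} (hx : 0 < x) :
    ∫ t in Ioi (0:ℝ), t ^ (-β) * Real.exp (-(x*t)) = x ^ (β - 1) * Real.Gamma (1 - β) := by
  have h := Real.integral_rpow_mul_exp_neg_mul_Ioi (a := 1-β) (r := x) (by linarith) hx
  rw [show (1:ℝ) - β - 1 = -β by ring] at h
  rw [h, one_div, Real.inv_rpow hx.le, ← Real.rpow_neg hx.le, show -(1-β) = β-1 by ring]

lemma aux_int {β : ℝ} (hβ1 : β < 1) {r : ℝ} (hr : 0 < r) :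
    IntegrableOn (fun t : ℝ => t ^ (-β) * Real.exp (-(r*t))) (Ioi 0) := by
  have h := integrableOn_rpow_mul_exp_neg_mul_rpow (s := -β) (p := 1) (b := r)
    (by linarith) one_pos hr
  exact h.congr_fun (fun t ht => by dsimp only; rw [Real.rpow_one, neg_mul]) measurableSet_Ioi

lemma aux_fubini {β : ℝ} (hβ0 : 0 < β) (hβ1 : β < 1) {T : ℝ} (hT : 0 < T) :
    Real.Gamma (1-β) * ∫ x in (0:ℝ)..T, x ^ (β-1) * Real.cos x
      = ∫ t in Ioi (0:ℝ),
          t ^ (-β) * ((t + Real.exp (-(t*T)) * (Real.sin T - t * Real.cos T)) / (1 + t^2)) := by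
  set c := Real.Gamma (1-β) with hc_def
  have hc : 0 < c := Real.Gamma_pos_of_pos (by linarith)
  -- measurability of the two-variable integrand
  have hmeas : AEStronglyMeasurable
      (Function.uncurry fun x t : ℝ => t ^ (-β) * (Real.exp (-(x*t)) * Real.cos x))
      ((volume.restrict (Ioc 0 T)).prod (volume.restrict (Ioi 0))) := by
    apply Measurable.aestronglyMeasurable
    fun_prop
  -- product integrability
  have haeint : ∀ᵐ x ∂(volume.restrict (Ioc 0 T)),
      Integrable (fun t : ℝ => t ^ (-β) * (Real.exp (-(x*t)) * Real.cos x))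
        (volume.restrict (Ioi 0)) := by
    filter_upwards [ae_restrict_mem measurableSet_Ioc] with x hx
    have h1 : Integrable (fun t : ℝ => (t ^ (-β) * Real.exp (-(x*t))) * Real.cos x)
        (volume.restrict (Ioi 0)) := (aux_int hβ1 hx.1).mul_const _
    exact h1.congr (by filter_upwards with t; ring_nf)
  have hxint : Integrable (fun x : ℝ => x ^ (β-1) * c) (volume.restrict (Ioc 0 T)) := by
    apply Integrable.mul_const
    have := intervalIntegral.intervalIntegrable_rpow' (a := 0) (b := T)
      (r := β - 1) (by linarith)
    rwa [intervalIntegrable_iff_integrableOn_Ioc_of_le hT.le] at this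
  have hnormint : Integrable
      (fun x : ℝ => ∫ t in Ioi (0:ℝ), ‖t ^ (-β) * (Real.exp (-(x*t)) * Real.cos x)‖)
      (volume.restrict (Ioc 0 T)) := by
    apply Integrable.mono' hxint
    · exact hmeas.norm.integral_prod_right'
    · filter_upwards [ae_restrict_mem measurableSet_Ioc] with x hx
      have hfi : Integrable (fun t : ℝ => t ^ (-β) * (Real.exp (-(x*t)) * Real.cos x))
          (volume.restrict (Ioi 0)) := by
        have h1 : Integrable (fun t : ℝ => (t ^ (-β) * Real.exp (-(x*t))) * Real.cos x)
            (volume.restrict (Ioi 0)) := (aux_int hβ1 hx.1).mul_const _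
        exact h1.congr (by filter_upwards with t; ring_nf)
      rw [Real.norm_eq_abs, abs_of_nonneg (integral_nonneg (fun t => norm_nonneg _))]
      calc ∫ t in Ioi (0:ℝ), ‖t ^ (-β) * (Real.exp (-(x*t)) * Real.cos x)‖
          ≤ ∫ t in Ioi (0:ℝ), t ^ (-β) * Real.exp (-(x*t)) := by
            apply integral_mono_ae hfi.norm (aux_int hβ1 hx.1)
            filter_upwards [ae_restrict_mem measurableSet_Ioi] with t ht
            have h0 : (0:ℝ) ≤ t ^ (-β) := (Real.rpow_pos_of_pos ht _).le
            rw [norm_mul, norm_mul, Real.norm_eq_abs, Real.norm_eq_abs, Real.norm_eq_abs,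
              abs_of_nonneg h0, abs_of_nonneg (Real.exp_pos _).le]
            calc t ^ (-β) * (Real.exp (-(x*t)) * |Real.cos x|)
                ≤ t ^ (-β) * (Real.exp (-(x*t)) * 1) := by
                  gcongr; exact abs_cos_le_one x
              _ = t ^ (-β) * Real.exp (-(x*t)) := by ring
        _ = x ^ (β-1) * c := aux_rep hβ1 hx.1
  have hprod : Integrable
      (Function.uncurry fun x t : ℝ => t ^ (-β) * (Real.exp (-(x*t)) * Real.cos x))
      ((volume.restrict (Ioc 0 T)).prod (volume.restrict (Ioi 0))) :=
    (integrable_prod_iff hmeas).mpr ⟨haeint, hnormint⟩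
  rw [intervalIntegral.integral_of_le hT.le, ← integral_const_mul]
  calc ∫ x in Ioc (0:ℝ) T, c * (x ^ (β-1) * Real.cos x)
      = ∫ x in Ioc (0:ℝ) T, ∫ t in Ioi (0:ℝ),
          t ^ (-β) * (Real.exp (-(x*t)) * Real.cos x) := by
        apply setIntegral_congr_fun measurableSet_Ioc
        intro x hx
        dsimp only
        have h1 : ∫ t in Ioi (0:ℝ), t ^ (-β) * (Real.exp (-(x*t)) * Real.cos x)
            = (∫ t in Ioi (0:ℝ), t ^ (-β) * Real.exp (-(x*t))) * Real.cos x := by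
          rw [← integral_mul_const]
          congr 1; funext t; ring
        rw [h1, aux_rep hβ1 hx.1]; ring
    _ = ∫ t in Ioi (0:ℝ), ∫ x in Ioc (0:ℝ) T,
          t ^ (-β) * (Real.exp (-(x*t)) * Real.cos x) := integral_integral_swap hprod
    _ = ∫ t in Ioi (0:ℝ),
          t ^ (-β) * ((t + Real.exp (-(t*T)) * (Real.sin T - t * Real.cos T)) / (1 + t^2)) := by
        apply setIntegral_congr_fun measurableSet_Ioi
        intro t ht
        dsimp only
        rw [← aux_ftc t T, intervalIntegral.integral_of_le hT.le, ← integral_const_mul]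
        congr 1; funext x; rw [mul_comm x t]

lemma aux_J {β : ℝ} (hβ0 : 0 < β) (hβ1 : β < 1) :
    IntegrableOn (fun t : ℝ => t ^ (1-β) / (1 + t^2)) (Ioi 0) ∧
    ∫ t in Ioi (0:ℝ), t ^ (1-β) / (1 + t^2) = π / (2 * Real.sin (π * β / 2)) := by
  set F : ℝ → ℝ → ℝ := fun u t => t ^ (1-β) * Real.exp (-(u*(1+t^2))) with hF
  have hmeas : AEStronglyMeasurable (Function.uncurry F)
      ((volume.restrict (Ioi 0)).prod (volume.restrict (Ioi 0))) := by
    apply Measurable.aestronglyMeasurable; fun_prop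
  -- integrability in t for fixed u > 0
  have htint : ∀ u : ℝ, 0 < u → Integrable (fun t => F u t) (volume.restrict (Ioi 0)) := by
    intro u hu
    have h1 := (integrableOn_rpow_mul_exp_neg_mul_sq hu (s := 1-β) (by linarith)).const_mul
      (Real.exp (-u))
    apply h1.congr
    filter_upwards with t
    rw [hF]
    dsimp only
    rw [show -(u*(1+t^2)) = -u + (-u * t^2) by ring, Real.exp_add]
    ring
  -- value of the t-integral for fixed u > 0
  have htval : ∀ u : ℝ, 0 < u → ∫ t in Ioi (0:ℝ), F u t
      = Real.exp (-u) * (u ^ (β/2 - 1) * ((1/2) * Real.Gamma (1 - β/2))) := by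
    intro u hu
    have h1 := integral_rpow_mul_exp_neg_mul_rpow (p := 2) (q := 1-β) (b := u)
      two_pos (by linarith) hu
    have h2 : ∫ t in Ioi (0:ℝ), F u t
        = Real.exp (-u) * ∫ t in Ioi (0:ℝ), t ^ (1-β) * Real.exp (-u * t ^ (2:ℝ)) := by
      rw [← integral_const_mul]
      apply setIntegral_congr_fun measurableSet_Ioi
      intro t ht
      rw [hF]
      dsimp only
      rw [Real.rpow_two, show -(u*(1+t^2)) = -u + (-u * t^2) by ring, Real.exp_add]
      ring
    rw [h2, h1, show (1-β+1) = 2-β by ring, show -(2-β)/2 = β/2 - 1 by ring,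
      show (2-β)/2 = 1 - β/2 by ring]
    ring
  -- norm integral in u is integrable
  have hnormint : Integrable
      (fun u : ℝ => ∫ t in Ioi (0:ℝ), ‖Function.uncurry F (u, t)‖)
      (volume.restrict (Ioi 0)) := by
    have hG : Integrable
        (fun u : ℝ => (Real.exp (-u) * u ^ (β/2 - 1)) * ((1/2) * Real.Gamma (1 - β/2)))
        (volume.restrict (Ioi 0)) :=
      (Real.GammaIntegral_convergent (by linarith : 0 < β/2)).mul_const _
    apply hG.congr
    filter_upwards [ae_restrict_mem measurableSet_Ioi] with u hu
    have : ∫ t in Ioi (0:ℝ), ‖Function.uncurry F (u, t)‖ = ∫ t in Ioi (0:ℝ), F u t := by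
      apply setIntegral_congr_fun measurableSet_Ioi
      intro t ht
      show ‖F u t‖ = F u t
      rw [Real.norm_eq_abs, abs_of_nonneg]
      rw [hF]; dsimp only
      exact mul_nonneg (Real.rpow_nonneg (le_of_lt ht) _) (Real.exp_pos _).le
    rw [this, htval u hu]
    ring
  have haeint : ∀ᵐ u ∂(volume.restrict (Ioi (0:ℝ))),
      Integrable (fun t => Function.uncurry F (u, t)) (volume.restrict (Ioi 0)) := by
    filter_upwards [ae_restrict_mem measurableSet_Ioi] with u hu
    exact htint u hu
  have hprod : Integrable (Function.uncurry F)
      ((volume.restrict (Ioi 0)).prod (volume.restrict (Ioi 0))) :=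
    (integrable_prod_iff hmeas).mpr ⟨haeint, hnormint⟩
  -- value of the u-integral for fixed t > 0
  have huval : ∀ t : ℝ, 0 < t → ∫ u in Ioi (0:ℝ), F u t = t ^ (1-β) / (1 + t^2) := by
    intro t ht
    have hb : (0:ℝ) < 1 + t^2 := by positivity
    have h1 := Real.integral_rpow_mul_exp_neg_mul_Ioi (a := 1) (r := 1 + t^2) one_pos hb
    have h2 : ∫ u in Ioi (0:ℝ), u ^ ((1:ℝ)-1) * Real.exp (-((1+t^2) * u))
        = ∫ u in Ioi (0:ℝ), Real.exp (-(u * (1+t^2))) := by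
      apply setIntegral_congr_fun measurableSet_Ioi
      intro u hu
      dsimp only
      norm_num [mul_comm]
    rw [h2] at h1
    rw [hF]
    dsimp only
    rw [integral_const_mul, h1, Real.rpow_one, Real.Gamma_one]
    ring
  -- marginal integrability
  have hmarg : IntegrableOn (fun t : ℝ => t ^ (1-β) / (1 + t^2)) (Ioi 0) := by
    have h1 := hprod.swap.integral_prod_left
    apply h1.congr
    filter_upwards [ae_restrict_mem measurableSet_Ioi] with t ht
    exact huval t ht
  refine ⟨hmarg, ?_⟩
  have hswap := integral_integral_swap hprod
  have hL : ∫ u in Ioi (0:ℝ), ∫ t in Ioi (0:ℝ), F u t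
      = (1/2) * Real.Gamma (1 - β/2) * Real.Gamma (β/2) := by
    have h1 : ∫ u in Ioi (0:ℝ), ∫ t in Ioi (0:ℝ), F u t
        = ∫ u in Ioi (0:ℝ), (Real.exp (-u) * u ^ (β/2 - 1)) * ((1/2) * Real.Gamma (1 - β/2)) := by
      apply setIntegral_congr_fun measurableSet_Ioi
      intro u hu
      dsimp only
      rw [htval u hu]; ring
    rw [h1, integral_mul_const, ← Real.Gamma_eq_integral (by linarith : 0 < β/2)]
    ring
  have hR : ∫ t in Ioi (0:ℝ), ∫ u in Ioi (0:ℝ), F u t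
      = ∫ t in Ioi (0:ℝ), t ^ (1-β) / (1 + t^2) := by
    apply setIntegral_congr_fun measurableSet_Ioi
    intro t ht
    exact huval t ht
  rw [← hR, ← hswap, hL]
  have href := Real.Gamma_mul_Gamma_one_sub (β/2)
  rw [show π * (β/2) = π * β / 2 by ring] at href
  rw [show (1:ℝ)/2 * Real.Gamma (1-β/2) * Real.Gamma (β/2)
    = (Real.Gamma (β/2) * Real.Gamma (1-β/2))/2 by ring, href]
  rw [div_div, mul_comm (Real.sin (π * β / 2))]

lemma aux_rep2 {β : ℝ} (hβ1 : β < 1) {r : ℝ} (hr : 0 < r) :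
    ∫ t in Ioi (0:ℝ), t ^ (-β) * Real.exp (-(r*t)) = (1/r) ^ (1-β) * Real.Gamma (1 - β) := by
  have h := Real.integral_rpow_mul_exp_neg_mul_Ioi (a := 1-β) (r := r) (by linarith) hr
  rwa [show (1:ℝ)-β-1 = -β by ring] at h

lemma aux_bound {β T t : ℝ} (ht : 0 < t) :
    ‖t ^ (-β) * (Real.exp (-(t*T)) * (Real.sin T - t * Real.cos T) / (1 + t^2))‖
      ≤ t ^ (-β) * Real.exp (-(T*t)) * 2 := by
  have h0 : (0:ℝ) ≤ t ^ (-β) := Real.rpow_nonneg ht.le _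
  have h2 : (0:ℝ) < 1 + t^2 := by positivity
  rw [norm_mul, Real.norm_eq_abs, Real.norm_eq_abs, abs_of_nonneg h0, abs_div,
    abs_of_pos h2, abs_mul, abs_of_pos (Real.exp_pos _)]
  rw [mul_comm T t]
  have hs : |Real.sin T - t * Real.cos T| ≤ 1 + t := by
    calc |Real.sin T - t * Real.cos T| ≤ |Real.sin T| + |t * Real.cos T| := abs_sub _ _
      _ ≤ 1 + t := by
        have := Real.abs_sin_le_one T
        have h3 : |t * Real.cos T| ≤ t := by
          rw [abs_mul, abs_of_pos ht]
          nlinarith [Real.abs_cos_le_one T, ht]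
        linarith
  have key : Real.exp (-(t*T)) * |Real.sin T - t * Real.cos T| / (1 + t^2)
      ≤ Real.exp (-(t*T)) * 2 := by
    rw [div_le_iff₀ h2]
    have h4 : (1:ℝ) + t ≤ 2 * (1 + t^2) := by nlinarith
    calc Real.exp (-(t*T)) * |Real.sin T - t * Real.cos T|
        ≤ Real.exp (-(t*T)) * (1 + t) := by gcongr
      _ ≤ Real.exp (-(t*T)) * (2 * (1 + t^2)) := by gcongr
      _ = Real.exp (-(t*T)) * 2 * (1 + t^2) := by ring
  calc t ^ (-β) * (Real.exp (-(t*T)) * |Real.sin T - t * Real.cos T| / (1 + t^2))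
      ≤ t ^ (-β) * (Real.exp (-(t*T)) * 2) := by gcongr
    _ = t ^ (-β) * Real.exp (-(t*T)) * 2 := by ring

lemma aux_tail {β : ℝ} (hβ0 : 0 < β) (hβ1 : β < 1) :
    Tendsto (fun T : ℝ => ∫ t in Ioi (0:ℝ),
        t ^ (-β) * (Real.exp (-(t*T)) * (Real.sin T - t * Real.cos T) / (1 + t^2)))
      atTop (nhds 0) := by
  set c := Real.Gamma (1-β) with hc_def
  have hb1 : ∀ᶠ T : ℝ in atTop, ‖∫ t in Ioi (0:ℝ),
      t ^ (-β) * (Real.exp (-(t*T)) * (Real.sin T - t * Real.cos T) / (1 + t^2))‖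
      ≤ (1/T) ^ (1-β) * c * 2 := by
    filter_upwards [eventually_gt_atTop (0:ℝ)] with T hT
    have hb : Integrable (fun t : ℝ => t ^ (-β) * Real.exp (-(T*t)) * 2)
        (volume.restrict (Ioi 0)) := (aux_int hβ1 hT).mul_const 2
    calc ‖∫ t in Ioi (0:ℝ),
          t ^ (-β) * (Real.exp (-(t*T)) * (Real.sin T - t * Real.cos T) / (1 + t^2))‖
        ≤ ∫ t in Ioi (0:ℝ), t ^ (-β) * Real.exp (-(T*t)) * 2 := by
          apply norm_integral_le_of_norm_le hb
          filter_upwards [ae_restrict_mem measurableSet_Ioi] with t ht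
          exact aux_bound ht
      _ = (1/T) ^ (1-β) * c * 2 := by
          rw [integral_mul_const, aux_rep2 hβ1 hT]
  refine squeeze_zero_norm' hb1 ?_
  have h1 : Tendsto (fun T : ℝ => (1/T) ^ (1-β)) atTop (nhds 0) := by
    have h2 := tendsto_rpow_neg_atTop (by linarith : (0:ℝ) < 1-β)
    apply h2.congr'
    filter_upwards [eventually_gt_atTop (0:ℝ)] with T hT
    rw [one_div, Real.inv_rpow hT.le, ← Real.rpow_neg hT.le]
  have := (h1.mul_const c).mul_const 2
  simpa using this

theorem improper_cos_integral (β : ℝ) (hβ0 : 0 < β) (hβ1 : β < 1) :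
    Tendsto (fun T : ℝ => ∫ x in (0:ℝ)..T, x ^ (β - 1) * Real.cos x) atTop
      (nhds (Real.Gamma β * Real.cos (π * β / 2))) := by
  set c := Real.Gamma (1-β) with hc_def
  have hc : 0 < c := Real.Gamma_pos_of_pos (by linarith)
  obtain ⟨hJint, hJval⟩ := aux_J hβ0 hβ1
  set J : ℝ := π / (2 * Real.sin (π * β / 2)) with hJ_def
  have key : ∀ᶠ T in atTop, (1/c) * (J + ∫ t in Ioi (0:ℝ),
      t ^ (-β) * (Real.exp (-(t*T)) * (Real.sin T - t * Real.cos T) / (1 + t^2)))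
      = ∫ x in (0:ℝ)..T, x ^ (β-1) * Real.cos x := by
    filter_upwards [eventually_gt_atTop (0:ℝ)] with T hT
    have hEint : Integrable (fun t : ℝ =>
        t ^ (-β) * (Real.exp (-(t*T)) * (Real.sin T - t * Real.cos T) / (1 + t^2)))
        (volume.restrict (Ioi 0)) := by
      apply Integrable.mono' ((aux_int hβ1 hT).mul_const 2)
      · apply Measurable.aestronglyMeasurable; fun_prop
      · filter_upwards [ae_restrict_mem measurableSet_Ioi] with t ht
        exact aux_bound ht
    have hsplit : ∫ t in Ioi (0:ℝ),
        t ^ (-β) * ((t + Real.exp (-(t*T)) * (Real.sin T - t * Real.cos T)) / (1 + t^2))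
        = J + ∫ t in Ioi (0:ℝ),
          t ^ (-β) * (Real.exp (-(t*T)) * (Real.sin T - t * Real.cos T) / (1 + t^2)) := by
      rw [← hJval, ← integral_add hJint hEint]
      apply setIntegral_congr_fun measurableSet_Ioi
      intro t ht
      dsimp only
      have ht' : (0:ℝ) < t := ht
      have h5 : t ^ (-β) * t = t ^ (1-β) := by
        rw [show t ^ (1-β) = t ^ (-β + 1) by ring_nf, Real.rpow_add ht', Real.rpow_one]
      calc t ^ (-β) * ((t + Real.exp (-(t*T)) * (Real.sin T - t * Real.cos T)) / (1 + t^2))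
          = (t ^ (-β) * t) / (1 + t^2)
            + t ^ (-β) * (Real.exp (-(t*T)) * (Real.sin T - t * Real.cos T) / (1 + t^2)) := by
            ring
        _ = t ^ (1-β) / (1 + t^2)
            + t ^ (-β) * (Real.exp (-(t*T)) * (Real.sin T - t * Real.cos T) / (1 + t^2)) := by
            rw [h5]
    rw [← aux_fubini hβ0 hβ1 hT] at hsplit
    rw [← hsplit]
    field_simp
    rfl
  have hlim : Tendsto (fun T : ℝ => (1/c) * (J + ∫ t in Ioi (0:ℝ),
      t ^ (-β) * (Real.exp (-(t*T)) * (Real.sin T - t * Real.cos T) / (1 + t^2))))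
      atTop (nhds ((1/c) * (J + 0))) :=
    ((tendsto_const_nhds.add (aux_tail hβ0 hβ1)).const_mul _)
  have hfinal : (1/c) * (J + 0) = Real.Gamma β * Real.cos (π * β / 2) := by
    rw [add_zero, hJ_def]
    have hsβ : 0 < Real.sin (π * β) := by
      apply Real.sin_pos_of_pos_of_lt_pi
      · positivity
      · nlinarith [Real.pi_pos]
    have hs : 0 < Real.sin (π * β / 2) := by
      apply Real.sin_pos_of_pos_of_lt_pi
      · positivity
      · nlinarith [Real.pi_pos]
    have h1 : Real.Gamma β * c * Real.sin (π * β) = π := by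
      rw [Real.Gamma_mul_Gamma_one_sub β, div_mul_cancel₀]
      exact ne_of_gt hsβ
    rw [show π * β = 2 * (π * β / 2) by ring, Real.sin_two_mul] at h1
    field_simp
    linear_combination -h1
  rw [← hfinal]
  exact hlim.congr' key
end
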